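/- arXiv:math/0612052 — 4 statements merged into one kernel-verified Lean document; each statement's English description precedes it below -/
import Mathlib

section
/- For every real λ > 0 and every nonnegative integer n, the partial sums of the exponential series satisfy s_n(λ)/s_{n+1}(λ) + s_{n+2}(λ)/s_{n+3}(λ) < 2·s_{n+1}(λ)/s_{n+2}(λ). -/
/-!
Write `t j = a ^ j / j!`. The recurrences `s (n + 1) = s n + t (n + 1)` and
`(j + 1) t (j + 1) = a t j` turn `(n + 2)² (n + 3)` times the defect `2 B² D - A C D - B C²`
(with `A, B, C, D = s n, …, s (n + 3)`) into `t (n + 1) (q₁ q₂ + a (2 q₁² - q₀ q₂))`, where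
`q₀ = B`, `q₁ = ∑_{j ≤ n+1} (n + 2 - j) t j` and `q₂ = ∑_{j ≤ n+1} (n + 2 - j) (n + 3 - j) t j`.
So it suffices to show `q₀ q₂ ≤ 2 q₁²`.

Expanding `2 (2 q₁² - q₀ q₂)` as a symmetric double sum over `i, j ≤ n + 1` and grouping it along
the antidiagonals `i + j = r`, the identity `t i t (r - i) = a ^ r / r! * choose r i` turns each
antidiagonal into a sum `∑ (K - 3 (r - 2 i)²) choose r i` over a window centred at `r / 2`. The
coefficients `k (k + 2) - 3 d²` sum to zero over a window of half-width `k`, decrease in `|d|`,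
and the binomial weights are symmetric and unimodal, so each such sum is nonnegative.
-/

/-- The `n`-th partial sum of the Taylor series of the exponential function. -/
noncomputable def s (n : ℕ) (a : ℝ) : ℝ :=
  ∑ j ∈ Finset.range (n + 1), a ^ j / (Nat.factorial j : ℝ)

open Finset

namespace Nat

theorem choose_le_choose_of_le_of_two_mul_le {n j i : ℕ} (hji : j ≤ i) (hi : 2 * i ≤ n) :
    n.choose j ≤ n.choose i := by
  induction i, hji using Nat.le_induction with
  | base => rfl
  | succ i _ ih => exact (ih (by omega)).trans (choose_le_succ_of_lt_half_left (by omega))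

theorem choose_le_choose_of_le_of_add_le {n j i : ℕ} (hji : j ≤ i) (hij : i + j ≤ n) :
    n.choose j ≤ n.choose i := by
  rcases le_or_gt (2 * i) n with hi | hi
  · exact choose_le_choose_of_le_of_two_mul_le hji hi
  · rw [← choose_symm (by omega : i ≤ n)]
    exact choose_le_choose_of_le_of_two_mul_le (by omega) (by omega)

end Nat

section Window

variable {w : ℕ → ℝ} {r : ℕ}

theorem sum_Icc_window_nonneg (hsymm : ∀ i ≤ r, w (r - i) = w i)
    (hmono : ∀ j i, j ≤ i → i + j ≤ r → w j ≤ w i) :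
    ∀ k l, 2 * l + k = r →
      0 ≤ ∑ i ∈ Icc l (l + k), ((k : ℝ) * (k + 2) - 3 * ((r : ℝ) - 2 * i) ^ 2) * w i
  | 0, l, hr => by
    have : (r : ℝ) = 2 * l := by rw [← hr]; push_cast; ring
    simp [this]
  | 1, l, hr => by
    have : (r : ℝ) = 2 * l + 1 := by rw [← hr]; push_cast; ring
    rw [sum_Icc_succ_top (by omega), Icc_self, sum_singleton]
    push_cast
    rw [this]; ring_nf; exact le_rfl
  | k + 2, l, hr => by
    -- Peel off both end points: their coefficient is `-2 (k + 1) (k + 2)`, and each of the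
    -- `k + 1` inner weights dominates `w l`.
    have ih := sum_Icc_window_nonneg hsymm hmono k (l + 1) (by omega)
    have hr' : (r : ℝ) = 2 * l + k + 2 := by rw [← hr]; push_cast; ring
    have hedge : w (l + 1 + k + 1) = w l := by
      rw [← hsymm l (by omega)]; congr 1; omega
    have hinner : (k + 1) * w l ≤ ∑ i ∈ Icc (l + 1) (l + 1 + k), w i := by
      have := card_nsmul_le_sum (Icc (l + 1) (l + 1 + k)) w (w l) fun i hi => by
        rw [mem_Icc] at hi; exact hmono l i (by omega) (by omega)
      rwa [Nat.card_Icc, show l + 1 + k + 1 - (l + 1) = k + 1 by omega, nsmul_eq_mul,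
        Nat.cast_succ] at this
    rw [show l + (k + 2) = l + 1 + k + 1 by omega, sum_Icc_succ_top (by omega),
      ← add_sum_Ioc_eq_sum_Icc (by omega), ← Icc_add_one_left_eq_Ioc, hedge]
    have hsplit : ∀ i ∈ Icc (l + 1) (l + 1 + k),
        (((k + 2 : ℕ) : ℝ) * ((k + 2 : ℕ) + 2) - 3 * ((r : ℝ) - 2 * i) ^ 2) * w i
          = ((k : ℝ) * (k + 2) - 3 * ((r : ℝ) - 2 * i) ^ 2) * w i + (4 * k + 8) * w i := by
      intro i _; push_cast; ring
    rw [sum_congr rfl hsplit, sum_add_distrib, ← mul_sum]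
    have hinner' := mul_le_mul_of_nonneg_left hinner (by positivity : (0 : ℝ) ≤ 4 * k + 8)
    have hbot : (((k + 2 : ℕ) : ℝ) * ((k + 2 : ℕ) + 2) - 3 * ((r : ℝ) - 2 * l) ^ 2)
        = -2 * (k + 1) * (k + 2) := by rw [hr']; push_cast; ring
    have htop : (((k + 2 : ℕ) : ℝ) * ((k + 2 : ℕ) + 2)
        - 3 * ((r : ℝ) - 2 * (l + 1 + k + 1 : ℕ)) ^ 2) = -2 * (k + 1) * (k + 2) := by
      rw [hr']; push_cast; ring
    rw [hbot, htop]
    linarith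

theorem sum_Icc_window_nonneg_of_le (hsymm : ∀ i ≤ r, w (r - i) = w i)
    (hmono : ∀ j i, j ≤ i → i + j ≤ r → w j ≤ w i) (hw : ∀ i, 0 ≤ w i) {k l : ℕ}
    (hr : 2 * l + k = r) {K : ℝ} (hK : k * (k + 2) ≤ K) :
    0 ≤ ∑ i ∈ Icc l (l + k), (K - 3 * ((r : ℝ) - 2 * i) ^ 2) * w i := by
  have hsplit : ∀ i ∈ Icc l (l + k), (K - 3 * ((r : ℝ) - 2 * i) ^ 2) * w i
      = ((k : ℝ) * (k + 2) - 3 * ((r : ℝ) - 2 * i) ^ 2) * w i + (K - k * (k + 2)) * w i := by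
    intro i _; ring
  rw [sum_congr rfl hsplit, sum_add_distrib, ← mul_sum]
  exact add_nonneg (sum_Icc_window_nonneg hsymm hmono k l hr)
    (mul_nonneg (by linarith) (sum_nonneg fun i _ => hw i))

end Window

theorem sum_range_sum_range_eq_sum_antidiagonals {β : Type*} [AddCommMonoid β] (N : ℕ)
    (f : ℕ → ℕ → β) :
    ∑ i ∈ range (N + 1), ∑ j ∈ range (N + 1), f i j
      = ∑ r ∈ range (2 * N + 1), ∑ i ∈ Icc (r - min r N) (min r N), f i (r - i) := by
  rw [← sum_product', sum_sigma']
  refine sum_bij' (fun p _ => ⟨p.1 + p.2, p.1⟩) (fun q _ => (q.2, q.1 - q.2)) ?_ ?_ ?_ ?_ ?_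
  all_goals intro p hp
  all_goals simp only [mem_product, mem_range, mem_sigma, mem_Icc] at hp ⊢
  · omega
  · omega
  · exact Prod.ext rfl (by simp)
  · obtain ⟨r, i⟩ := p
    simp only at hp ⊢
    rw [Nat.add_sub_cancel' (by omega)]
  · rw [Nat.add_sub_cancel_left]

noncomputable def expTerm (a : ℝ) (j : ℕ) : ℝ := a ^ j / j.factorial

theorem expTerm_pos {a : ℝ} (ha : 0 < a) (j : ℕ) : 0 < expTerm a j := by
  unfold expTerm; positivity

theorem succ_mul_expTerm_succ (a : ℝ) (j : ℕ) : (j + 1) * expTerm a (j + 1) = a * expTerm a j := by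
  unfold expTerm
  rw [Nat.factorial_succ, Nat.cast_mul, pow_succ]
  field_simp
  push_cast; ring

theorem expTerm_mul_expTerm_sub (a : ℝ) {i r : ℕ} (hi : i ≤ r) :
    expTerm a i * expTerm a (r - i) = a ^ r / r.factorial * r.choose i := by
  unfold expTerm
  rw [Nat.cast_choose ℝ hi, div_mul_div_comm, ← pow_add, Nat.add_sub_cancel' hi]
  field_simp

theorem s_eq_sum_expTerm (n : ℕ) (a : ℝ) : s n a = ∑ j ∈ range (n + 1), expTerm a j := rfl

theorem s_succ (n : ℕ) (a : ℝ) : s (n + 1) a = s n a + expTerm a (n + 1) :=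
  sum_range_succ _ _

theorem s_pos {a : ℝ} (ha : 0 < a) (n : ℕ) : 0 < s n a :=
  sum_pos (fun j _ => expTerm_pos ha j) nonempty_range_add_one

theorem mul_sum_expTerm (a : ℝ) (m : ℕ) (f : ℕ → ℝ) :
    a * ∑ j ∈ range m, f (j + 1) * expTerm a j = ∑ j ∈ range (m + 1), j * f j * expTerm a j := by
  rw [sum_range_succ', mul_sum]
  simp only [CharP.cast_eq_zero, zero_mul, add_zero, Nat.cast_succ]
  refine sum_congr rfl fun j _ => ?_
  linear_combination -f (j + 1) * succ_mul_expTerm_succ a j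

section Moments

variable (a : ℝ) (M : ℕ)

theorem sum_sub_mul_expTerm :
    ∑ j ∈ range (M + 1), ((M : ℝ) + 1 - j) * expTerm a j = (M + 1) * s (M + 1) a - a * s M a := by
  have h := mul_sum_expTerm a (M + 1) fun _ => 1
  simp only [one_mul, mul_one] at h
  rw [s_eq_sum_expTerm, s_eq_sum_expTerm, h, mul_sum, ← sum_sub_distrib, sum_range_succ _ (M + 1)]
  push_cast
  simp only [sub_self, add_zero]
  exact sum_congr rfl fun j _ => by ring

theorem sum_sub_mul_sub_mul_expTerm :
    ∑ j ∈ range (M + 1), ((M : ℝ) + 1 - j) * ((M : ℝ) + 2 - j) * expTerm a j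
      = (M + 1) * (M + 2) * s (M + 2) a - 2 * a * (M + 1) * s (M + 1) a + a ^ 2 * s M a := by
  have h1 := mul_sum_expTerm a (M + 2) fun _ => 1
  have h2 := mul_sum_expTerm a (M + 2) fun j => (j : ℝ) - 1
  have h0 := mul_sum_expTerm a (M + 1) fun _ => 1
  simp only [one_mul, mul_one, Nat.cast_succ, add_sub_cancel_right] at h0 h1 h2
  have h := calc
    ∑ j ∈ range (M + 1), ((M : ℝ) + 1 - j) * ((M : ℝ) + 2 - j) * expTerm a j
      = ∑ j ∈ range (M + 2 + 1), ((M : ℝ) + 1 - j) * ((M : ℝ) + 2 - j) * expTerm a j := by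
        rw [sum_range_succ _ (M + 2), sum_range_succ _ (M + 1)]; push_cast; ring
    _ = ∑ j ∈ range (M + 2 + 1), ((M + 1) * (M + 2) * expTerm a j
          - 2 * (M + 1) * (j * expTerm a j) + j * (j - 1) * expTerm a j) :=
        sum_congr rfl fun j _ => by ring
  simp only [sum_add_distrib, sum_sub_distrib, ← mul_sum] at h
  rw [s_eq_sum_expTerm, s_eq_sum_expTerm, s_eq_sum_expTerm]
  linear_combination h + 2 * (M + 1) * h1 - a * h0 - h2

end Moments

theorem two_mul_two_mul_sq_sub_mul_eq_sum_sum {ι : Type*} (S : Finset ι) (x c : ι → ℝ) :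
    2 * (2 * (∑ j ∈ S, x j * c j) ^ 2 - (∑ j ∈ S, c j) * ∑ j ∈ S, x j * (x j + 1) * c j)
      = ∑ i ∈ S, ∑ j ∈ S, (4 * x i * x j - x i * (x i + 1) - x j * (x j + 1)) * (c i * c j) := by
  set Q0 := ∑ j ∈ S, c j
  set Q1 := ∑ j ∈ S, x j * c j
  set Q2 := ∑ j ∈ S, x j * (x j + 1) * c j
  rw [show 2 * (2 * Q1 ^ 2 - Q0 * Q2) = 4 * (Q1 * Q1) - Q0 * Q2 - Q2 * Q0 by ring,
    sum_mul_sum, sum_mul_sum, sum_mul_sum, mul_sum, ← sum_sub_distrib, ← sum_sub_distrib]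
  refine sum_congr rfl fun i _ => ?_
  rw [mul_sum, ← sum_sub_distrib, ← sum_sub_distrib]
  exact sum_congr rfl fun j _ => by ring

theorem sum_Icc_mul_choose_nonneg {M r : ℕ} (hr : r ≤ 2 * M) :
    0 ≤ ∑ i ∈ Icc (r - min r M) (min r M),
      (((2 * M + 2 - r) * (2 * M - r) : ℝ) - 3 * ((r : ℝ) - 2 * i) ^ 2) * r.choose i := by
  set l := r - min r M
  set k := 2 * min r M - r
  have hkr : (k : ℝ) ≤ 2 * M - r := by
    rw [le_sub_iff_add_le]; exact_mod_cast (by omega : k + r ≤ 2 * M)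
  rw [show min r M = l + k by omega]
  exact sum_Icc_window_nonneg_of_le (w := fun i => (r.choose i : ℝ))
    (fun i hi => by simp only [Nat.choose_symm hi])
    (fun j i hji hij => by exact_mod_cast Nat.choose_le_choose_of_le_of_add_le hji hij)
    (fun i => Nat.cast_nonneg _) (by omega) (by nlinarith)

theorem sum_expTerm_mul_sum_le {a : ℝ} (ha : 0 ≤ a) (M : ℕ) :
    (∑ j ∈ range (M + 1), expTerm a j)
        * ∑ j ∈ range (M + 1), ((M : ℝ) + 1 - j) * ((M : ℝ) + 2 - j) * expTerm a j
      ≤ 2 * (∑ j ∈ range (M + 1), ((M : ℝ) + 1 - j) * expTerm a j) ^ 2 := by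
  set x : ℕ → ℝ := fun j => (M : ℝ) + 1 - j with hx
  have hQ2 : ∑ j ∈ range (M + 1), ((M : ℝ) + 1 - j) * ((M : ℝ) + 2 - j) * expTerm a j
      = ∑ j ∈ range (M + 1), x j * (x j + 1) * expTerm a j :=
    sum_congr rfl fun j _ => by simp only [hx]; ring
  have hdouble := two_mul_two_mul_sq_sub_mul_eq_sum_sum (range (M + 1)) x (expTerm a)
  rw [sum_range_sum_range_eq_sum_antidiagonals] at hdouble
  suffices hfiber : ∀ r ∈ range (2 * M + 1), 0 ≤ ∑ i ∈ Icc (r - min r M) (min r M),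
      (4 * x i * x (r - i) - x i * (x i + 1) - x (r - i) * (x (r - i) + 1))
        * (expTerm a i * expTerm a (r - i)) by
    rw [hQ2]
    linarith [sum_nonneg hfiber]
  intro r hr
  -- `x i + x (r - i) = 2 M + 2 - r` and `x i - x (r - i) = r - 2 i`
  have hterm : ∀ i ∈ Icc (r - min r M) (min r M),
      (4 * x i * x (r - i) - x i * (x i + 1) - x (r - i) * (x (r - i) + 1))
        * (expTerm a i * expTerm a (r - i))
      = a ^ r / r.factorial / 2
        * ((((2 * M + 2 - r) * (2 * M - r) : ℝ) - 3 * ((r : ℝ) - 2 * i) ^ 2) * r.choose i) := by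
    intro i hi
    have hir : i ≤ r := by rw [mem_Icc] at hi; omega
    rw [expTerm_mul_expTerm_sub a hir, hx]
    simp only
    rw [Nat.cast_sub hir]
    ring
  rw [sum_congr rfl hterm, ← mul_sum]
  exact mul_nonneg (by positivity) (sum_Icc_mul_choose_nonneg (by rw [mem_range] at hr; omega))

theorem sum_range_mul_expTerm_pos {a : ℝ} (ha : 0 < a) {M : ℕ} {f : ℕ → ℝ}
    (hf : ∀ j ≤ M, 0 < f j) : 0 < ∑ j ∈ range (M + 1), f j * expTerm a j :=
  sum_pos (fun j hj => mul_pos (hf j (by rw [mem_range] at hj; omega)) (expTerm_pos ha j))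
    nonempty_range_add_one

theorem moment_combination_pos {a : ℝ} (ha : 0 < a) (n : ℕ) :
    0 < ((n + 2) * s (n + 2) a - a * s (n + 1) a)
        * ((n + 2) * (n + 3) * s (n + 3) a - 2 * a * (n + 2) * s (n + 2) a + a ^ 2 * s (n + 1) a)
      + a * (2 * ((n + 2) * s (n + 2) a - a * s (n + 1) a) ^ 2
        - s (n + 1) a
          * ((n + 2) * (n + 3) * s (n + 3) a - 2 * a * (n + 2) * s (n + 2) a
            + a ^ 2 * s (n + 1) a)) := by
  have hj : ∀ j ≤ n + 1, (0 : ℝ) < (n + 1 : ℕ) + 1 - j := fun j hj => by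
    have : (j : ℝ) ≤ (n + 1 : ℕ) := by exact_mod_cast hj
    linarith
  have hQ1 := sum_range_mul_expTerm_pos ha hj
  have hQ2 := sum_range_mul_expTerm_pos ha
    (f := fun j => ((n + 1 : ℕ) + 1 - (j : ℝ)) * ((n + 1 : ℕ) + 2 - (j : ℝ)))
    fun j hj' => mul_pos (hj j hj') (by linarith [hj j hj'])
  have hCS := sum_expTerm_mul_sum_le ha.le (n + 1)
  rw [sum_sub_mul_expTerm] at hQ1 hCS
  rw [sum_sub_mul_sub_mul_expTerm] at hQ2 hCS
  rw [← s_eq_sum_expTerm] at hCS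
  push_cast at hQ1 hQ2 hCS
  linarith [mul_pos hQ1 hQ2, mul_nonneg ha.le (sub_nonneg.2 hCS)]

theorem convexity_defect_eq (a : ℝ) (n : ℕ) :
    ((n : ℝ) + 2) ^ 2 * ((n : ℝ) + 3)
        * (2 * s (n + 1) a ^ 2 * s (n + 3) a - s n a * s (n + 2) a * s (n + 3) a
          - s (n + 1) a * s (n + 2) a ^ 2)
      = expTerm a (n + 1) * (((n + 2) * s (n + 2) a - a * s (n + 1) a)
        * ((n + 2) * (n + 3) * s (n + 3) a - 2 * a * (n + 2) * s (n + 2) a + a ^ 2 * s (n + 1) a)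
      + a * (2 * ((n + 2) * s (n + 2) a - a * s (n + 1) a) ^ 2
        - s (n + 1) a
          * ((n + 2) * (n + 3) * s (n + 3) a - 2 * a * (n + 2) * s (n + 2) a
            + a ^ 2 * s (n + 1) a))) := by
  have h2 : expTerm a (n + 2) = a * expTerm a (n + 1) / (n + 2) := by
    rw [eq_div_iff (by positivity), ← succ_mul_expTerm_succ]; push_cast; ring
  have h3 : expTerm a (n + 3) = a * expTerm a (n + 2) / (n + 3) := by
    rw [eq_div_iff (by positivity), ← succ_mul_expTerm_succ]; push_cast; ring
  rw [s_succ (n + 2), s_succ (n + 1), s_succ n, h3, h2]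
  field_simp
  ring

theorem div_add_div_lt_two_mul_div_iff {A B C D : ℝ} (hB : 0 < B) (hC : 0 < C) (hD : 0 < D) :
    A / B + C / D < 2 * (B / C) ↔ 0 < 2 * B ^ 2 * D - A * C * D - B * C ^ 2 := by
  rw [div_add_div _ _ hB.ne' hD.ne', ← mul_div_assoc, div_lt_div_iff₀ (mul_pos hB hD) hC, ← sub_pos]
  ring_nf

theorem stmt_0 (a : ℝ) (ha : 0 < a) (n : ℕ) :
    s n a / s (n + 1) a + s (n + 2) a / s (n + 3) a < 2 * (s (n + 1) a / s (n + 2) a) := by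
  rw [div_add_div_lt_two_mul_div_iff (s_pos ha _) (s_pos ha _) (s_pos ha _)]
  refine pos_of_mul_pos_right ?_ (by positivity : (0 : ℝ) ≤ ((n : ℝ) + 2) ^ 2 * ((n : ℝ) + 3))
  rw [convexity_defect_eq]
  exact mul_pos (expTerm_pos ha _) (moment_combination_pos ha n)
end

section
/- For every real λ > 0 and every nonnegative integer n, the analytic continuation of Erlang's loss function coincides with its elementary definition: ( λ · ∫₀^∞ e^{−λt} (1+t)^n dt )^{-1} = (λ^n/n!) / ∑_{j=0}^n λ^j/j!. -/
/-! Expanding `(1 + t) ^ n` binomially turns the integral into a sum of Gamma integrals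
`∫₀^∞ e^{-at} t^k dt = k! / a^(k+1)`. Since `choose n k * k! = n! / (n - k)!`, reindexing by
`j = n - k` turns `a` times this sum into `n! / a^n * s n a`. -/

open MeasureTheory

open Finset Real Set Nat

lemma integral_exp_neg_mul_mul_pow_Ioi {a : ℝ} (ha : 0 < a) (k : ℕ) :
    ∫ t in Ioi (0 : ℝ), exp (-a * t) * t ^ k = k ! / a ^ (k + 1) := by
  have h := integral_rpow_mul_exp_neg_mul_Ioi (a := k + 1) (by positivity) ha
  rw [add_sub_cancel_right, Gamma_nat_eq_factorial, one_div, inv_rpow ha.le,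
    ← Nat.cast_add_one, rpow_natCast] at h
  rw [div_eq_inv_mul, ← h]
  refine setIntegral_congr_fun measurableSet_Ioi fun t _ => ?_
  rw [rpow_natCast, neg_mul, mul_comm]

lemma integrableOn_exp_neg_mul_mul_pow_Ioi {a : ℝ} (ha : 0 < a) (k : ℕ) :
    IntegrableOn (fun t : ℝ => exp (-a * t) * t ^ k) (Ioi 0) := by
  refine (integrableOn_congr_fun (fun t _ => ?_) measurableSet_Ioi).mp
    (integrableOn_rpow_mul_exp_neg_mul_rpow (s := k) (by linarith [k.cast_nonneg (α := ℝ)])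
      one_pos ha)
  rw [rpow_one, rpow_natCast, mul_comm]

lemma integral_exp_neg_mul_mul_one_add_pow_Ioi {a : ℝ} (ha : 0 < a) (n : ℕ) :
    ∫ t in Ioi (0 : ℝ), exp (-a * t) * (1 + t) ^ n
      = ∑ k ∈ range (n + 1), (n.descFactorial k : ℝ) / a ^ (k + 1) := by
  have h_binom : ∀ t : ℝ, exp (-a * t) * (1 + t) ^ n
      = ∑ k ∈ range (n + 1), (n.choose k : ℝ) * (exp (-a * t) * t ^ k) := fun t => by
    rw [add_comm, add_pow, mul_sum]
    exact sum_congr rfl fun k _ => by ring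
  simp_rw [h_binom]
  rw [integral_finsetSum _ fun k _ => (integrableOn_exp_neg_mul_mul_pow_Ioi ha k).const_mul _]
  refine sum_congr rfl fun k _ => ?_
  rw [integral_const_mul, integral_exp_neg_mul_mul_pow_Ioi ha, descFactorial_eq_factorial_mul_choose]
  push_cast
  ring

lemma mul_sum_descFactorial_div_pow_succ {a : ℝ} (ha : a ≠ 0) (n : ℕ) :
    a * ∑ k ∈ range (n + 1), (n.descFactorial k : ℝ) / a ^ (k + 1) = n ! / a ^ n * s n a := by
  rw [s, mul_sum, mul_sum]
  conv_rhs => rw [← sum_range_reflect]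
  refine sum_congr rfl fun k hk => ?_
  have hkn : k ≤ n := Nat.lt_succ_iff.mp (mem_range.mp hk)
  rw [add_tsub_cancel_right, ← factorial_mul_descFactorial hkn, ← pow_sub_mul_pow a hkn]
  push_cast
  field_simp
  ring

theorem stmt_4 (a : ℝ) (ha : 0 < a) (n : ℕ) :
    (a * ∫ t in Set.Ioi (0 : ℝ), Real.exp (-a * t) * (1 + t) ^ (n : ℝ))⁻¹
      = (a ^ n / (Nat.factorial n : ℝ)) / s n a := by
  simp_rw [rpow_natCast]
  rw [integral_exp_neg_mul_mul_one_add_pow_Ioi ha, mul_sum_descFactorial_div_pow_succ ha.ne',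
    mul_inv, inv_div, div_eq_mul_inv (_ / _)]
end

section
/- For every real λ > 0, the continued Erlang loss function x ↦ B(x, λ) is a strictly convex function of x on the interval [0, ∞). -/
open MeasureTheory Set Filter Real Topology

/-- The analytic continuation of Erlang's loss function. -/
noncomputable def erlangB (x a : ℝ) : ℝ :=
  (a * ∫ t in Set.Ioi (0 : ℝ), Real.exp (-a * t) * (1 + t) ^ x)⁻¹

namespace ErlangAux

/-- density after change of variables `t = exp u - 1` -/
noncomputable def g (a x u : ℝ) : ℝ := Real.exp (-a * (Real.exp u - 1) + (x + 1) * u)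

lemma g_pos (a x u : ℝ) : 0 < g a x u := Real.exp_pos _

lemma g_cont (a x : ℝ) : Continuous (g a x) := by
  unfold g; fun_prop

/-- two-point log-concavity inequality -/
lemma g_mul_le {a : ℝ} (ha : 0 < a) (x : ℝ) {p q δ : ℝ} (hpq : p ≤ q) (hδ : 0 ≤ δ) :
    g a x p * g a x (q + δ) ≤ g a x (p + δ) * g a x q := by
  unfold g
  rw [← Real.exp_add, ← Real.exp_add, Real.exp_le_exp]
  have h1 : Real.exp p ≤ Real.exp q := Real.exp_le_exp.2 hpq
  have h2 : 1 ≤ Real.exp δ := Real.one_le_exp hδ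
  have e1 : Real.exp (p + δ) = Real.exp p * Real.exp δ := Real.exp_add _ _
  have e2 : Real.exp (q + δ) = Real.exp q * Real.exp δ := Real.exp_add _ _
  rw [e1, e2]
  nlinarith [mul_nonneg (mul_nonneg ha.le (sub_nonneg.2 h1)) (sub_nonneg.2 h2)]

lemma g_mul_lt {a : ℝ} (ha : 0 < a) (x : ℝ) {p q δ : ℝ} (hpq : p < q) (hδ : 0 < δ) :
    g a x p * g a x (q + δ) < g a x (p + δ) * g a x q := by
  unfold g
  rw [← Real.exp_add, ← Real.exp_add, Real.exp_lt_exp]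
  have h1 : Real.exp p < Real.exp q := Real.exp_lt_exp.2 hpq
  have h2 : 1 < Real.exp δ := Real.one_lt_exp_iff.2 hδ
  have e1 : Real.exp (p + δ) = Real.exp p * Real.exp δ := Real.exp_add _ _
  have e2 : Real.exp (q + δ) = Real.exp q * Real.exp δ := Real.exp_add _ _
  rw [e1, e2]
  nlinarith [mul_pos (mul_pos ha (sub_pos.2 h1)) (sub_pos.2 h2)]

/-- the basic exponential decay bound -/
lemma exp_aux_bound {a : ℝ} (ha : 0 < a) (c : ℝ) {u : ℝ} (hu : 0 ≤ u) :
    Real.exp (-a * (Real.exp u - 1) + c * u) ≤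
      Real.exp ((c + 2) ^ 2 / a) * (Real.exp (-u) * Real.exp (-u)) := by
  rw [← Real.exp_add, ← Real.exp_add, Real.exp_le_exp]
  have h4 : 1 + u ^ 2 / 4 ≤ Real.exp u := by
    have h := Real.add_one_le_exp (u / 2)
    have h0 : (0:ℝ) ≤ u / 2 + 1 := by linarith
    have hsq : (u / 2 + 1) ^ 2 ≤ Real.exp (u / 2) ^ 2 := by nlinarith
    have he : Real.exp (u / 2) ^ 2 = Real.exp u := by
      rw [sq, ← Real.exp_add]; ring_nf
    nlinarith
  have key : ((c + 2) * u - a * (u ^ 2 / 4)) * a ≤ (c + 2) ^ 2 := by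
    nlinarith [sq_nonneg (a * u - 2 * (c + 2))]
  have key' : (c + 2) * u - a * (u ^ 2 / 4) ≤ (c + 2) ^ 2 / a := by
    rw [le_div_iff₀ ha]; exact key
  nlinarith [mul_le_mul_of_nonneg_left h4 ha.le]


/-- translation for integrals over `Ioi` -/
lemma integral_Ioi_comp_add (f : ℝ → ℝ) (c d : ℝ) :
    ∫ s in Set.Ioi c, f (s + d) = ∫ s in Set.Ioi (c + d), f s := by
  have A : MeasurableEmbedding fun s : ℝ => s + d :=
    (Homeomorph.addRight d).isClosedEmbedding.measurableEmbedding
  have hmap : Measure.map (fun s : ℝ => s + d) volume = volume := map_add_right_eq_self volume d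
  symm
  calc ∫ s in Set.Ioi (c + d), f s
      = ∫ s in Set.Ioi (c + d), f s ∂(Measure.map (fun s : ℝ => s + d) volume) := by rw [hmap]
    _ = ∫ s in (fun s : ℝ => s + d) ⁻¹' Set.Ioi (c + d), f (s + d) := A.setIntegral_map _ _
    _ = ∫ s in Set.Ioi c, f (s + d) := by rw [preimage_add_const_Ioi]; norm_num

lemma integrableOn_Ioi_comp_add {f : ℝ → ℝ} (c d : ℝ) (h : IntegrableOn f (Set.Ioi (c + d))) :
    IntegrableOn (fun s => f (s + d)) (Set.Ioi c) := by
  have A : MeasurableEmbedding fun s : ℝ => s + d :=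
    (Homeomorph.addRight d).isClosedEmbedding.measurableEmbedding
  have hmap : Measure.map (fun s : ℝ => s + d) volume = volume := map_add_right_eq_self volume d
  rw [← hmap] at h
  have := (A.integrableOn_map_iff (f := f) (s := Set.Ioi (c + d))).1 h
  rwa [preimage_add_const_Ioi, add_sub_cancel_right] at this

section Tail

variable {f : ℝ → ℝ} {K : ℝ}

lemma integrableOn_Ioi_of_bound (hc : Continuous f)
    (hb : ∀ u, 0 ≤ u → ‖f u‖ ≤ K * (Real.exp (-u) * Real.exp (-u))) (c : ℝ) :
    IntegrableOn f (Set.Ioi c) := by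
  have hK : 0 ≤ K := by
    have := hb 0 le_rfl
    have h0 : (0:ℝ) ≤ ‖f 0‖ := norm_nonneg _
    simpa using le_trans h0 (by simpa using this)
  have htail : IntegrableOn f (Set.Ioi 0) := by
    refine Integrable.mono' ((exp_neg_integrableOn_Ioi 0 one_pos).const_mul K)
      hc.aestronglyMeasurable.restrict ?_
    filter_upwards [ae_restrict_mem measurableSet_Ioi] with u hu
    have hu' : (0:ℝ) ≤ u := le_of_lt hu
    have h1 : Real.exp (-u) ≤ 1 := Real.exp_le_one_iff.2 (by linarith)
    calc ‖f u‖ ≤ K * (Real.exp (-u) * Real.exp (-u)) := hb u hu'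
      _ ≤ K * (1 * Real.exp (-u)) := by
          have he := Real.exp_pos (-u)
          nlinarith [mul_nonneg (mul_nonneg hK he.le) (sub_nonneg.2 h1)]
      _ = K * Real.exp (-1 * u) := by ring_nf
  rcases le_or_gt 0 c with h | h
  · exact htail.mono_set (Set.Ioi_subset_Ioi h)
  · have h1 : IntegrableOn f (Set.Ioc c 0) := (hc.integrableOn_Ioc)
    have := h1.union htail
    rwa [Set.Ioc_union_Ioi_eq_Ioi h.le] at this

lemma hasDerivAt_tail (hc : Continuous f)
    (hb : ∀ u, 0 ≤ u → ‖f u‖ ≤ K * (Real.exp (-u) * Real.exp (-u))) (v : ℝ) :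
    HasDerivAt (fun w => ∫ u in Set.Ioi w, f u) (-(f v)) v := by
  set c := v - 1 with hc'
  have hint : ∀ b : ℝ, IntegrableOn f (Set.Ioi b) := integrableOn_Ioi_of_bound hc hb
  have key : ∀ w, c < w → (∫ u in Set.Ioi w, f u)
      = (∫ u in Set.Ioi c, f u) - ∫ t in c..w, f t := by
    intro w hw
    have hsplit : (∫ u in Set.Ioi c, f u)
        = (∫ u in Set.Ioc c w, f u) + ∫ u in Set.Ioi w, f u := by
      rw [← setIntegral_union (Set.Ioc_disjoint_Ioi le_rfl) measurableSet_Ioi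
        ((hint c).mono_set Set.Ioc_subset_Ioi_self) (hint w),
        Set.Ioc_union_Ioi_eq_Ioi hw.le]
    rw [intervalIntegral.integral_of_le hw.le]
    linarith
  have hD : HasDerivAt (fun w => (∫ u in Set.Ioi c, f u) - ∫ t in c..w, f t) (-(f v)) v := by
    have h1 : HasDerivAt (fun w => ∫ t in c..w, f t) (f v) v :=
      intervalIntegral.integral_hasDerivAt_right (hc.intervalIntegrable c v)
        (hc.stronglyMeasurable.stronglyMeasurableAtFilter) hc.continuousAt
    simpa using (h1.const_sub (∫ u in Set.Ioi c, f u))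
  apply hD.congr_of_eventuallyEq
  filter_upwards [Ioi_mem_nhds (show c < v by simp [hc'])] with w hw
  exact key w hw

lemma tail_le (hc : Continuous f) (h0 : ∀ u, 0 ≤ f u)
    (hb : ∀ u, 0 ≤ u → ‖f u‖ ≤ K * (Real.exp (-u) * Real.exp (-u)))
    {v : ℝ} (hv : 0 ≤ v) :
    (∫ u in Set.Ioi v, f u) ≤ K * (Real.exp (-v) * Real.exp (-v)) := by
  have hK : 0 ≤ K := by
    have := hb 0 le_rfl
    have h0' : (0:ℝ) ≤ ‖f 0‖ := norm_nonneg _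
    simpa using le_trans h0' (by simpa using this)
  have hmono : (∫ u in Set.Ioi v, f u) ≤ ∫ u in Set.Ioi v, (K * Real.exp (-v)) * Real.exp (-u) := by
    have hbint : IntegrableOn (fun u => K * Real.exp (-v) * Real.exp (-u)) (Set.Ioi v) := by
      have h := (exp_neg_integrableOn_Ioi v one_pos).const_mul (K * Real.exp (-v))
      apply h.congr
      filter_upwards with u
      norm_num
    apply setIntegral_mono_on (integrableOn_Ioi_of_bound hc hb v) hbint measurableSet_Ioi
    intro u hu
    have huv : v ≤ u := (le_of_lt hu)
    have hu0 : (0:ℝ) ≤ u := le_trans hv huv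
    have hfu := hb u hu0
    rw [Real.norm_of_nonneg (h0 u)] at hfu
    have hexp : Real.exp (-u) ≤ Real.exp (-v) := Real.exp_le_exp.2 (by linarith)
    have hm := mul_le_mul_of_nonneg_right (mul_le_mul_of_nonneg_left hexp hK) (Real.exp_pos (-u)).le
    nlinarith
  calc (∫ u in Set.Ioi v, f u) ≤ ∫ u in Set.Ioi v, (K * Real.exp (-v)) * Real.exp (-u) := hmono
    _ = (K * Real.exp (-v)) * ∫ u in Set.Ioi v, Real.exp (-u) := by
        rw [MeasureTheory.integral_const_mul]
    _ = K * (Real.exp (-v) * Real.exp (-v)) := by rw [integral_exp_neg_Ioi]; ring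

end Tail

section Density

variable {a : ℝ} (x : ℝ)

/-- decay constant -/
noncomputable def K (a x : ℝ) : ℝ := Real.exp ((x + 3) ^ 2 / a)

lemma pow_g_bound (ha : 0 < a) (k : ℕ) :
    ∀ u, 0 ≤ u → ‖(u : ℝ) ^ k * g a x u‖ ≤ K a (x + k) * (Real.exp (-u) * Real.exp (-u)) := by
  intro u hu
  have hg := g_pos a x u
  have hpk : (0:ℝ) ≤ u ^ k := pow_nonneg hu k
  rw [Real.norm_of_nonneg (by positivity)]
  have h1 : u ^ k ≤ Real.exp ((k : ℝ) * u) := by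
    have h2 : u ≤ Real.exp u := by linarith [Real.add_one_le_exp u]
    calc u ^ k ≤ Real.exp u ^ k := pow_le_pow_left₀ hu h2 k
      _ = Real.exp ((k : ℝ) * u) := (Real.exp_nat_mul u k).symm
  have h3 : u ^ k * g a x u ≤ Real.exp (-a * (Real.exp u - 1) + (x + k + 1) * u) := by
    calc u ^ k * g a x u ≤ Real.exp ((k : ℝ) * u) * g a x u :=
          mul_le_mul_of_nonneg_right h1 hg.le
      _ = Real.exp (-a * (Real.exp u - 1) + (x + k + 1) * u) := by
          unfold g; rw [← Real.exp_add]; ring_nf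
  have h4 := exp_aux_bound ha (x + k + 1) hu
  have h5 : (x + (k:ℝ) + 1 + 2) ^ 2 = (x + (k:ℝ) + 3) ^ 2 := by ring
  rw [h5] at h4
  exact le_trans h3 h4

lemma g_bound (ha : 0 < a) :
    ∀ u, 0 ≤ u → ‖g a x u‖ ≤ K a x * (Real.exp (-u) * Real.exp (-u)) := by
  intro u hu
  have := pow_g_bound x ha 0 u hu
  simpa using this

lemma integrableOn_pow_g (ha : 0 < a) (k : ℕ) (c : ℝ) :
    IntegrableOn (fun u => u ^ k * g a x u) (Set.Ioi c) := by
  refine integrableOn_Ioi_of_bound ?_ (pow_g_bound x ha k) c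
  unfold g; fun_prop

lemma integrableOn_g (ha : 0 < a) (c : ℝ) : IntegrableOn (g a x) (Set.Ioi c) := by
  have := integrableOn_pow_g x ha 0 c
  simpa using this

/-- the survival function -/
noncomputable def Gbar (a x v : ℝ) : ℝ := ∫ u in Set.Ioi v, g a x u

lemma Gbar_pos (ha : 0 < a) (v : ℝ) : 0 < Gbar a x v := by
  rw [Gbar, setIntegral_pos_iff_support_of_nonneg_ae]
  · have : Function.support (g a x) = Set.univ := by
      ext u; simp [Function.mem_support, (g_pos a x u).ne']
    rw [this, Set.univ_inter, Real.volume_Ioi]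
    simp
  · filter_upwards with u using (g_pos a x u).le
  · exact integrableOn_g x ha v

lemma hasDerivAt_Gbar (ha : 0 < a) (v : ℝ) :
    HasDerivAt (Gbar a x) (-(g a x v)) v :=
  hasDerivAt_tail (g_cont a x) (g_bound x ha) v

lemma Gbar_cont (ha : 0 < a) : Continuous (Gbar a x) :=
  continuous_iff_continuousAt.2 fun v => (hasDerivAt_Gbar x ha v).differentiableAt.continuousAt

lemma Gbar_bound (ha : 0 < a) :
    ∀ v, 0 ≤ v → ‖Gbar a x v‖ ≤ K a x * (Real.exp (-v) * Real.exp (-v)) := by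
  intro v hv
  rw [Real.norm_of_nonneg (Gbar_pos x ha v).le]
  exact tail_le (g_cont a x) (fun u => (g_pos a x u).le) (g_bound x ha) hv

lemma integrableOn_Gbar (ha : 0 < a) (c : ℝ) : IntegrableOn (Gbar a x) (Set.Ioi c) :=
  integrableOn_Ioi_of_bound (Gbar_cont x ha) (Gbar_bound x ha) c

/-- iterated survival function -/
noncomputable def T (a x v : ℝ) : ℝ := ∫ u in Set.Ioi v, Gbar a x u

lemma hasDerivAt_T (ha : 0 < a) (v : ℝ) :
    HasDerivAt (T a x) (-(Gbar a x v)) v :=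
  hasDerivAt_tail (Gbar_cont x ha) (Gbar_bound x ha) v

lemma T_cont (ha : 0 < a) : Continuous (T a x) :=
  continuous_iff_continuousAt.2 fun v => (hasDerivAt_T x ha v).differentiableAt.continuousAt

lemma T_bound (ha : 0 < a) :
    ∀ v, 0 ≤ v → ‖T a x v‖ ≤ K a x * (Real.exp (-v) * Real.exp (-v)) := by
  intro v hv
  rw [T, Real.norm_of_nonneg (integral_nonneg fun u => (Gbar_pos x ha u).le)]
  exact tail_le (Gbar_cont x ha) (fun u => (Gbar_pos x ha u).le) (Gbar_bound x ha) hv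

lemma integrableOn_T (ha : 0 < a) (c : ℝ) : IntegrableOn (T a x) (Set.Ioi c) :=
  integrableOn_Ioi_of_bound (T_cont x ha) (T_bound x ha) c

lemma tendsto_pow_mul_of_bound {F : ℝ → ℝ} {K' : ℝ}
    (hb : ∀ v, 0 ≤ v → ‖F v‖ ≤ K' * (Real.exp (-v) * Real.exp (-v))) (n : ℕ) :
    Tendsto (fun v => v ^ n * F v) atTop (𝓝 0) := by
  have hK : 0 ≤ K' := by
    have h := hb 0 le_rfl
    have h0 : (0:ℝ) ≤ ‖F 0‖ := norm_nonneg _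
    simpa using le_trans h0 (by simpa using h)
  have htend : Tendsto (fun v : ℝ => K' * (v ^ n * Real.exp (-v))) atTop (𝓝 0) := by
    have := (tendsto_pow_mul_exp_neg_atTop_nhds_zero n).const_mul K'
    simpa using this
  apply squeeze_zero_norm' _ htend
  filter_upwards [eventually_ge_atTop (0:ℝ)] with v hv
  have h1 : Real.exp (-v) ≤ 1 := Real.exp_le_one_iff.2 (by linarith)
  have h2 := hb v hv
  have hpk : (0:ℝ) ≤ v ^ n := pow_nonneg hv n
  have hev := Real.exp_pos (-v)
  calc ‖v ^ n * F v‖ = v ^ n * ‖F v‖ := by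
        rw [norm_mul, Real.norm_of_nonneg hpk]
    _ ≤ v ^ n * (K' * (Real.exp (-v) * Real.exp (-v))) := by
        exact mul_le_mul_of_nonneg_left h2 hpk
    _ ≤ K' * (v ^ n * Real.exp (-v)) := by
        nlinarith [mul_nonneg (mul_nonneg hK hpk) hev.le,
          mul_nonneg (mul_nonneg (mul_nonneg hK hpk) hev.le) (sub_nonneg.2 h1)]

end Density

section Hazard

variable {a : ℝ} (x : ℝ)

lemma hazard (ha : 0 < a) {u₁ u₂ : ℝ} (h : u₁ ≤ u₂) :
    g a x u₁ * Gbar a x u₂ ≤ g a x u₂ * Gbar a x u₁ := by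
  set δ := u₂ - u₁ with hδdef
  have hδ : 0 ≤ δ := by simp [hδdef]; linarith
  have hu₂ : u₂ = u₁ + δ := by ring
  have htrans : Gbar a x u₂ = ∫ s in Set.Ioi u₁, g a x (s + δ) := by
    rw [integral_Ioi_comp_add (g a x) u₁ δ, Gbar, ← hu₂]
  have hint1 : IntegrableOn (fun s => g a x u₁ * g a x (s + δ)) (Set.Ioi u₁) :=
    (integrableOn_Ioi_comp_add u₁ δ (integrableOn_g x ha (u₁ + δ))).const_mul _
  have hint2 : IntegrableOn (fun s => g a x u₂ * g a x s) (Set.Ioi u₁) :=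
    (integrableOn_g x ha u₁).const_mul _
  have hpt : ∀ s ∈ Set.Ioi u₁, g a x u₁ * g a x (s + δ) ≤ g a x u₂ * g a x s := by
    intro s hs
    rw [hu₂]
    exact g_mul_le ha x (le_of_lt hs) hδ
  calc g a x u₁ * Gbar a x u₂ = ∫ s in Set.Ioi u₁, g a x u₁ * g a x (s + δ) := by
        rw [htrans, MeasureTheory.integral_const_mul]
    _ ≤ ∫ s in Set.Ioi u₁, g a x u₂ * g a x s :=
        setIntegral_mono_on hint1 hint2 measurableSet_Ioi hpt
    _ = g a x u₂ * Gbar a x u₁ := by rw [MeasureTheory.integral_const_mul]; rfl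

lemma hazard_strict (ha : 0 < a) {u₁ u₂ : ℝ} (h : u₁ < u₂) :
    g a x u₁ * Gbar a x u₂ < g a x u₂ * Gbar a x u₁ := by
  set δ := u₂ - u₁ with hδdef
  have hδ : 0 < δ := by simp [hδdef]; linarith
  have hu₂ : u₂ = u₁ + δ := by ring
  have htrans : Gbar a x u₂ = ∫ s in Set.Ioi u₁, g a x (s + δ) := by
    rw [integral_Ioi_comp_add (g a x) u₁ δ, Gbar, ← hu₂]
  have hint1 : IntegrableOn (fun s => g a x u₁ * g a x (s + δ)) (Set.Ioi u₁) :=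
    (integrableOn_Ioi_comp_add u₁ δ (integrableOn_g x ha (u₁ + δ))).const_mul _
  have hint2 : IntegrableOn (fun s => g a x u₂ * g a x s) (Set.Ioi u₁) :=
    (integrableOn_g x ha u₁).const_mul _
  have hpos : 0 < ∫ s in Set.Ioi u₁, (g a x u₂ * g a x s - g a x u₁ * g a x (s + δ)) := by
    rw [setIntegral_pos_iff_support_of_nonneg_ae]
    · have hsub : Set.Ioi u₁ ⊆ Function.support
          (fun s => g a x u₂ * g a x s - g a x u₁ * g a x (s + δ)) := by
        intro s hs
        have := g_mul_lt (x := x) ha (show u₁ < s from hs) hδ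
        rw [← hu₂] at this
        simp only [Function.mem_support]
        intro hcontra
        nlinarith [this]
      rw [Set.inter_eq_self_of_subset_right hsub, Real.volume_Ioi]
      simp
    · filter_upwards [ae_restrict_mem measurableSet_Ioi] with s hs
      have := g_mul_le (x := x) ha (le_of_lt (show u₁ < s from hs)) hδ.le
      rw [← hu₂] at this
      simp only [Pi.zero_apply]
      linarith
    · exact hint2.sub hint1
  have heq : (∫ s in Set.Ioi u₁, (g a x u₂ * g a x s - g a x u₁ * g a x (s + δ)))
      = g a x u₂ * Gbar a x u₁ - g a x u₁ * Gbar a x u₂ := by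
    rw [integral_sub hint2 hint1, MeasureTheory.integral_const_mul, MeasureTheory.integral_const_mul,
      htrans]
    rfl
  linarith [heq ▸ hpos]

/-- new better than used: `Gbar 0 * Gbar (u + s) ≤ Gbar u * Gbar s` for `u, s ≥ 0`. -/
lemma hasDerivAt_ratio (ha : 0 < a) (s : ℝ) (u : ℝ) :
    HasDerivAt (fun w => Gbar a x (w + s) / Gbar a x w)
      ((-(g a x (u + s)) * Gbar a x u - Gbar a x (u + s) * (-(g a x u))) / (Gbar a x u) ^ 2) u := by
  have h1 : HasDerivAt (fun w : ℝ => Gbar a x (w + s)) (-(g a x (u + s))) u := by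
    have := (hasDerivAt_Gbar x ha (u + s)).comp u ((hasDerivAt_id u).add_const s)
    exact this.congr_deriv (by simp)
  exact h1.div (hasDerivAt_Gbar x ha u) (Gbar_pos x ha u).ne'

lemma deriv_ratio (ha : 0 < a) (s : ℝ) (u : ℝ) :
    deriv (fun w => Gbar a x (w + s) / Gbar a x w) u
      = ((-(g a x (u + s)) * Gbar a x u - Gbar a x (u + s) * (-(g a x u))) / (Gbar a x u) ^ 2) :=
  (hasDerivAt_ratio x ha s u).deriv

lemma nbu (ha : 0 < a) {s u : ℝ} (hs : 0 ≤ s) (hu : 0 ≤ u) :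
    Gbar a x 0 * Gbar a x (u + s) ≤ Gbar a x u * Gbar a x s := by
  have hanti : AntitoneOn (fun w => Gbar a x (w + s) / Gbar a x w) (Set.Ici 0) := by
    apply antitoneOn_of_deriv_nonpos (convex_Ici 0)
    · exact Continuous.continuousOn (by
        exact continuous_iff_continuousAt.2 fun v =>
          (hasDerivAt_ratio x ha s v).differentiableAt.continuousAt)
    · intro v _
      exact (hasDerivAt_ratio x ha s v).differentiableAt.differentiableWithinAt
    · intro v hv
      rw [deriv_ratio x ha s v]
      apply div_nonpos_of_nonpos_of_nonneg _ (sq_nonneg _)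
      have := hazard x ha (show v ≤ v + s by linarith)
      nlinarith
  have h := hanti (Set.self_mem_Ici) (show u ∈ Set.Ici 0 from hu) hu
  simp only [zero_add] at h
  rw [div_le_div_iff₀ (Gbar_pos x ha u) (Gbar_pos x ha 0)] at h
  nlinarith [h]

lemma nbu_strict (ha : 0 < a) {s u : ℝ} (hs : 0 < s) (hu : 0 < u) :
    Gbar a x 0 * Gbar a x (u + s) < Gbar a x u * Gbar a x s := by
  have hanti : StrictAntiOn (fun w => Gbar a x (w + s) / Gbar a x w) (Set.Ici 0) := by
    apply strictAntiOn_of_deriv_neg (convex_Ici 0)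
    · exact Continuous.continuousOn (by
        exact continuous_iff_continuousAt.2 fun v =>
          (hasDerivAt_ratio x ha s v).differentiableAt.continuousAt)
    · intro v hv
      rw [interior_Ici] at hv
      rw [deriv_ratio x ha s v]
      apply div_neg_of_neg_of_pos _ (pow_pos (Gbar_pos x ha v) 2)
      have := hazard_strict x ha (show v < v + s by linarith)
      nlinarith
  have h := hanti (Set.self_mem_Ici) (show u ∈ Set.Ici 0 from hu.le) hu
  simp only [zero_add] at h
  rw [div_lt_div_iff₀ (Gbar_pos x ha u) (Gbar_pos x ha 0)] at h
  nlinarith [h]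

end Hazard

section FTC

variable {a : ℝ} (x : ℝ)

lemma integrableOn_id_mul_of_bound {F : ℝ → ℝ} {K' : ℝ} (hc : Continuous F)
    (hb : ∀ u, 0 ≤ u → ‖F u‖ ≤ K' * (Real.exp (-u) * Real.exp (-u))) :
    IntegrableOn (fun u => u * F u) (Set.Ioi 0) := by
  have hK : 0 ≤ K' := by
    have h := hb 0 le_rfl
    have h0 : (0:ℝ) ≤ ‖F 0‖ := norm_nonneg _
    simpa using le_trans h0 (by simpa using h)
  have hbint : IntegrableOn (fun u : ℝ => K' * Real.exp (-u)) (Set.Ioi 0) := by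
    have h := (exp_neg_integrableOn_Ioi 0 one_pos).const_mul K'
    apply h.congr
    filter_upwards with u
    norm_num
  refine Integrable.mono' hbint ((continuous_id.mul hc).aestronglyMeasurable.restrict) ?_
  filter_upwards [ae_restrict_mem measurableSet_Ioi] with u hu
  have hu' : (0:ℝ) ≤ u := le_of_lt hu
  have hue : u * Real.exp (-u) ≤ 1 := by
    have h2 : u ≤ Real.exp u := by linarith [Real.add_one_le_exp u]
    have h3 := mul_le_mul_of_nonneg_right h2 (Real.exp_pos (-u)).le
    rwa [← Real.exp_add, add_neg_cancel, Real.exp_zero] at h3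
  have hev := (Real.exp_pos (-u)).le
  calc ‖u * F u‖ = u * ‖F u‖ := by rw [norm_mul, Real.norm_of_nonneg hu']
    _ ≤ u * (K' * (Real.exp (-u) * Real.exp (-u))) :=
        mul_le_mul_of_nonneg_left (hb u hu') hu'
    _ ≤ K' * Real.exp (-u) := by
        nlinarith [mul_le_mul_of_nonneg_left hue (mul_nonneg hK hev)]

lemma integral_id_mul_g (ha : 0 < a) :
    (∫ u in Set.Ioi 0, u * g a x u) = T a x 0 := by
  have hderiv : ∀ u ∈ Set.Ici (0:ℝ),
      HasDerivAt (fun u => -(u * Gbar a x u)) (-(Gbar a x u) + u * g a x u) u := by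
    intro u _
    have h1 : HasDerivAt (fun u => u * Gbar a x u)
        (1 * Gbar a x u + u * -(g a x u)) u :=
      (hasDerivAt_id u).mul (hasDerivAt_Gbar x ha u)
    have := h1.fun_neg
    exact this.congr_deriv (by ring)
  have hint : IntegrableOn (fun u => -(Gbar a x u) + u * g a x u) (Set.Ioi 0) := by
    refine ((integrableOn_Gbar x ha 0).neg).add ?_
    have := integrableOn_pow_g x ha 1 0
    simpa using this
  have htend : Tendsto (fun u => -(u * Gbar a x u)) atTop (𝓝 0) := by
    have := (tendsto_pow_mul_of_bound (Gbar_bound x ha) 1).neg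
    simpa using this
  have hres := integral_Ioi_of_hasDerivAt_of_tendsto' hderiv hint htend
  have hneg : IntegrableOn (fun u => -(Gbar a x u)) (Set.Ioi 0) := (integrableOn_Gbar x ha 0).neg
  have hmul : IntegrableOn (fun u : ℝ => u * g a x u) (Set.Ioi 0) := by
    simpa using integrableOn_pow_g x ha 1 0
  rw [integral_add hneg hmul, integral_neg] at hres
  have : -T a x 0 + (∫ u in Set.Ioi 0, u * g a x u) = 0 := by
    simpa [T] using hres
  linarith

lemma integral_sq_mul_g (ha : 0 < a) :
    (∫ u in Set.Ioi 0, u ^ 2 * g a x u) = 2 * ∫ u in Set.Ioi 0, u * Gbar a x u := by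
  have hintuG : IntegrableOn (fun u => u * Gbar a x u) (Set.Ioi 0) :=
    integrableOn_id_mul_of_bound (Gbar_cont x ha) (Gbar_bound x ha)
  have hderiv : ∀ u ∈ Set.Ici (0:ℝ),
      HasDerivAt (fun u => -(u ^ 2 * Gbar a x u))
        (-(2 * (u * Gbar a x u)) + u ^ 2 * g a x u) u := by
    intro u _
    have h0 : HasDerivAt (fun u : ℝ => u ^ 2) (2 * u) u := by
      simpa using hasDerivAt_pow 2 u
    have h1 : HasDerivAt (fun u => u ^ 2 * Gbar a x u)
        (2 * u * Gbar a x u + u ^ 2 * -(g a x u)) u :=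
      h0.mul (hasDerivAt_Gbar x ha u)
    have := h1.fun_neg
    exact this.congr_deriv (by ring)
  have hint : IntegrableOn
      (fun u => -(2 * (u * Gbar a x u)) + u ^ 2 * g a x u) (Set.Ioi 0) := by
    refine ((hintuG.const_mul 2).neg).add ?_
    exact integrableOn_pow_g x ha 2 0
  have htend : Tendsto (fun u => -(u ^ 2 * Gbar a x u)) atTop (𝓝 0) := by
    have := (tendsto_pow_mul_of_bound (Gbar_bound x ha) 2).neg
    simpa using this
  have hres := integral_Ioi_of_hasDerivAt_of_tendsto' hderiv hint htend
  have hneg : IntegrableOn (fun u => -(2 * (u * Gbar a x u))) (Set.Ioi 0) :=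
    (hintuG.const_mul 2).neg
  have hmul : IntegrableOn (fun u : ℝ => u ^ 2 * g a x u) (Set.Ioi 0) := by
    simpa using integrableOn_pow_g x ha 2 0
  rw [integral_add hneg hmul, integral_neg, MeasureTheory.integral_const_mul] at hres
  simp only [ne_eq, OfNat.ofNat_ne_zero, not_false_eq_true, zero_pow, zero_mul, neg_zero,
    mul_zero, sub_zero] at hres
  linarith

lemma integral_T (ha : 0 < a) :
    (∫ u in Set.Ioi 0, T a x u) = ∫ u in Set.Ioi 0, u * Gbar a x u := by
  have hintuG : IntegrableOn (fun u => u * Gbar a x u) (Set.Ioi 0) :=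
    integrableOn_id_mul_of_bound (Gbar_cont x ha) (Gbar_bound x ha)
  have hderiv : ∀ u ∈ Set.Ici (0:ℝ),
      HasDerivAt (fun u => -(u * T a x u)) (-(T a x u) + u * Gbar a x u) u := by
    intro u _
    have h1 : HasDerivAt (fun u => u * T a x u)
        (1 * T a x u + u * -(Gbar a x u)) u :=
      (hasDerivAt_id u).mul (hasDerivAt_T x ha u)
    have := h1.fun_neg
    exact this.congr_deriv (by ring)
  have hint : IntegrableOn (fun u => -(T a x u) + u * Gbar a x u) (Set.Ioi 0) :=
    ((integrableOn_T x ha 0).neg).add hintuG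
  have htend : Tendsto (fun u => -(u * T a x u)) atTop (𝓝 0) := by
    have := (tendsto_pow_mul_of_bound (T_bound x ha) 1).neg
    simpa using this
  have hres := integral_Ioi_of_hasDerivAt_of_tendsto' hderiv hint htend
  have hneg : IntegrableOn (fun u => -(T a x u)) (Set.Ioi 0) := (integrableOn_T x ha 0).neg
  rw [integral_add hneg hintuG, integral_neg] at hres
  simp only [mul_zero, zero_mul, neg_zero, sub_zero] at hres
  linarith

lemma T_mul_lt (ha : 0 < a) {u : ℝ} (hu : 0 < u) :
    T a x u * Gbar a x 0 < T a x 0 * Gbar a x u := by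
  have htransT : T a x u = ∫ s in Set.Ioi 0, Gbar a x (s + u) := by
    rw [integral_Ioi_comp_add (Gbar a x) 0 u, zero_add]
    rfl
  have hintshift : IntegrableOn (fun s => Gbar a x (s + u)) (Set.Ioi 0) := by
    apply integrableOn_Ioi_comp_add 0 u
    rw [zero_add]
    exact integrableOn_Gbar x ha u
  have hint1 : IntegrableOn (fun s => Gbar a x s * Gbar a x u) (Set.Ioi 0) :=
    (integrableOn_Gbar x ha 0).mul_const _
  have hint2 : IntegrableOn (fun s => Gbar a x (s + u) * Gbar a x 0) (Set.Ioi 0) :=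
    hintshift.mul_const _
  have hpos : 0 < ∫ s in Set.Ioi 0,
      (Gbar a x s * Gbar a x u - Gbar a x (s + u) * Gbar a x 0) := by
    rw [setIntegral_pos_iff_support_of_nonneg_ae]
    · have hsub : Set.Ioi (0:ℝ) ⊆ Function.support
          (fun s => Gbar a x s * Gbar a x u - Gbar a x (s + u) * Gbar a x 0) := by
        intro s hs
        have h := nbu_strict x ha (show (0:ℝ) < s from hs) hu
        rw [add_comm u s] at h
        simp only [Function.mem_support]
        intro hcontra
        nlinarith [h]
      rw [Set.inter_eq_self_of_subset_right hsub, Real.volume_Ioi]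
      simp
    · filter_upwards [ae_restrict_mem measurableSet_Ioi] with s hs
      have h := nbu x ha (le_of_lt (show (0:ℝ) < s from hs)) hu.le
      rw [add_comm u s] at h
      simp only [Pi.zero_apply]
      linarith
    · exact hint1.sub hint2
  have heq : (∫ s in Set.Ioi 0,
        (Gbar a x s * Gbar a x u - Gbar a x (s + u) * Gbar a x 0))
      = T a x 0 * Gbar a x u - T a x u * Gbar a x 0 := by
    rw [integral_sub hint1 hint2, MeasureTheory.integral_mul_const,
      MeasureTheory.integral_mul_const, ← htransT]
    rfl
  linarith [heq ▸ hpos]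

/-- final second-moment inequality : `F0 * F2 < 2 * F1 ^ 2` -/
lemma key_ineq (ha : 0 < a) :
    (∫ u in Set.Ioi 0, g a x u) * (∫ u in Set.Ioi 0, u ^ 2 * g a x u)
      < 2 * (∫ u in Set.Ioi 0, u * g a x u) ^ 2 := by
  have hA : (∫ u in Set.Ioi 0, g a x u) = Gbar a x 0 := rfl
  have h1 := integral_id_mul_g x ha
  have h2 := integral_sq_mul_g x ha
  have h3 := integral_T x ha
  have hpos : 0 < ∫ u in Set.Ioi 0,
      (T a x 0 * Gbar a x u - T a x u * Gbar a x 0) := by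
    rw [setIntegral_pos_iff_support_of_nonneg_ae]
    · have hsub : Set.Ioi (0:ℝ) ⊆ Function.support
          (fun u => T a x 0 * Gbar a x u - T a x u * Gbar a x 0) := by
        intro u hu
        have h := T_mul_lt x ha (show (0:ℝ) < u from hu)
        simp only [Function.mem_support]
        intro hcontra
        nlinarith [h]
      rw [Set.inter_eq_self_of_subset_right hsub, Real.volume_Ioi]
      simp
    · filter_upwards [ae_restrict_mem measurableSet_Ioi] with u hu
      have h := T_mul_lt x ha (show (0:ℝ) < u from hu)
      simp only [Pi.zero_apply]
      linarith
    · exact ((integrableOn_Gbar x ha 0).const_mul _).sub ((integrableOn_T x ha 0).mul_const _)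
  have heq : (∫ u in Set.Ioi 0, (T a x 0 * Gbar a x u - T a x u * Gbar a x 0))
      = T a x 0 * T a x 0 - (∫ u in Set.Ioi 0, T a x u) * Gbar a x 0 := by
    rw [integral_sub ((integrableOn_Gbar x ha 0).const_mul _) ((integrableOn_T x ha 0).mul_const _),
      MeasureTheory.integral_const_mul, MeasureTheory.integral_mul_const]
    rfl
  have hfin : (∫ u in Set.Ioi 0, T a x u) * Gbar a x 0 < T a x 0 * T a x 0 := by
    linarith [heq ▸ hpos]
  rw [h3] at hfin
  rw [hA, h1, h2]
  nlinarith [hfin]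

end FTC

section Assembly

variable {a : ℝ}

/-- the moments -/
noncomputable def F (a x : ℝ) (k : ℕ) : ℝ := ∫ u in Set.Ioi 0, u ^ k * g a x u

lemma g_le_of_le {x y u : ℝ} (hu : 0 < u) (hxy : x ≤ y) : g a x u ≤ g a y u := by
  unfold g
  rw [Real.exp_le_exp]
  nlinarith

lemma hasDerivAt_F (ha : 0 < a) (k : ℕ) (x : ℝ) :
    HasDerivAt (fun y => F a y k) (F a x (k + 1)) x := by
  have main := hasDerivAt_integral_of_dominated_loc_of_deriv_le
    (F := fun y u => u ^ k * g a y u) (F' := fun y u => u ^ (k + 1) * g a y u)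
    (x₀ := x) (s := Metric.ball x 1) (bound := fun u => u ^ (k + 1) * g a (x + 1) u)
    (μ := volume.restrict (Set.Ioi 0)) (Metric.ball_mem_nhds x one_pos)
    ?meas ?int ?meas' ?bd ?bint ?diff
  · exact main.2
  case meas =>
    filter_upwards with y
    exact (Continuous.aestronglyMeasurable (by unfold g; fun_prop)).restrict
  case int => exact integrableOn_pow_g x ha k 0
  case meas' =>
    exact (Continuous.aestronglyMeasurable (by unfold g; fun_prop)).restrict
  case bd =>
    filter_upwards [ae_restrict_mem measurableSet_Ioi] with u hu
    intro y hy
    have hy' : y ≤ x + 1 := by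
      have := Metric.mem_ball.1 hy
      rw [Real.dist_eq] at this
      cases abs_lt.1 this with
      | intro h1 h2 => linarith
    have hg := g_le_of_le (a := a) (show (0:ℝ) < u from hu) hy'
    have hgp := g_pos a y u
    have hpk : (0:ℝ) ≤ u ^ (k + 1) := pow_nonneg (le_of_lt hu) _
    rw [Real.norm_of_nonneg (by positivity)]
    exact mul_le_mul_of_nonneg_left hg hpk
  case bint => exact integrableOn_pow_g (x + 1) ha (k + 1) 0
  case diff =>
    filter_upwards [ae_restrict_mem measurableSet_Ioi] with u hu
    intro y _
    have hinner : HasDerivAt (fun y : ℝ => -a * (Real.exp u - 1) + (y + 1) * u)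
        (1 * u) y :=
      (((hasDerivAt_id y).add_const 1).mul_const u).const_add (-a * (Real.exp u - 1))
    have hexp : HasDerivAt (fun y : ℝ => g a y u) (g a y u * (1 * u)) y := by
      unfold g
      exact hinner.exp
    have := hexp.const_mul (u ^ k)
    exact this.congr_deriv (by ring)

lemma F_zero_eq (x : ℝ) : F a x 0 = Gbar a x 0 := by
  unfold F Gbar
  simp

lemma F_pos (ha : 0 < a) (x : ℝ) : 0 < F a x 0 := by
  rw [F_zero_eq]; exact Gbar_pos x ha 0

lemma key_ineq' (ha : 0 < a) (x : ℝ) : F a x 0 * F a x 2 < 2 * F a x 1 ^ 2 := by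
  have h := key_ineq x ha
  have e0 : F a x 0 = ∫ u in Set.Ioi 0, g a x u := by unfold F; simp
  have e1 : F a x 1 = ∫ u in Set.Ioi 0, u * g a x u := by unfold F; simp
  rw [e0, e1]
  exact h

/-- change of variables -/
lemma erlangB_eq (ha : 0 < a) (x : ℝ) : erlangB x a = (a * F a x 0)⁻¹ := by
  have himg : (fun u : ℝ => Real.exp u - 1) '' Set.Ioi 0 = Set.Ioi 0 := by
    ext t
    constructor
    · rintro ⟨u, hu, rfl⟩
      have : (1:ℝ) < Real.exp u := Real.one_lt_exp_iff.2 hu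
      simp only [Set.mem_Ioi]
      linarith
    · intro ht
      refine ⟨Real.log (1 + t), ?_, ?_⟩
      · apply Real.log_pos
        simpa using by linarith [Set.mem_Ioi.1 ht]
      · show Real.exp (Real.log (1 + t)) - 1 = t
        rw [Real.exp_log (by linarith [Set.mem_Ioi.1 ht])]; ring
  have hderiv : ∀ u ∈ Set.Ioi (0:ℝ),
      HasDerivWithinAt (fun u : ℝ => Real.exp u - 1) (Real.exp u) (Set.Ioi 0) u := by
    intro u _
    exact ((Real.hasDerivAt_exp u).sub_const 1).hasDerivWithinAt
  have hinj : Set.InjOn (fun u : ℝ => Real.exp u - 1) (Set.Ioi 0) := by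
    intro p _ q _ h
    exact Real.exp_injective (by dsimp at h; linarith)
  have hcv := integral_image_eq_integral_abs_deriv_smul measurableSet_Ioi hderiv hinj
    (fun t => Real.exp (-a * t) * (1 + t) ^ x)
  rw [himg] at hcv
  have heq : ∀ u ∈ Set.Ioi (0:ℝ),
      |Real.exp u| • (Real.exp (-a * (Real.exp u - 1)) * (1 + (Real.exp u - 1)) ^ x)
        = g a x u := by
    intro u _
    have hpos := Real.exp_pos u
    rw [abs_of_pos hpos, smul_eq_mul]
    have hrp : (1 + (Real.exp u - 1)) ^ x = Real.exp (u * x) := by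
      have h1 : (1 : ℝ) + (Real.exp u - 1) = Real.exp u := by ring
      rw [h1, Real.rpow_def_of_pos hpos, Real.log_exp]
    rw [hrp]
    unfold g
    rw [← Real.exp_add, ← Real.exp_add]
    ring_nf
  have hcv2 : (∫ t in Set.Ioi (0:ℝ), Real.exp (-a * t) * (1 + t) ^ x)
      = ∫ u in Set.Ioi (0:ℝ), g a x u := by
    rw [hcv]
    exact setIntegral_congr_fun measurableSet_Ioi heq
  rw [erlangB, hcv2]
  congr 2
  unfold F
  simp

end Assembly

end ErlangAux

open ErlangAux

theorem stmt_5 (a : ℝ) (ha : 0 < a) :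
    StrictConvexOn ℝ (Set.Ici (0 : ℝ)) (fun x => erlangB x a) := by
  have hBeq : (fun x => erlangB x a) = fun x => (a * F a x 0)⁻¹ :=
    funext fun x => erlangB_eq ha x
  rw [hBeq]
  set B := fun x => (a * F a x 0)⁻¹ with hB
  have hne : ∀ x, a * F a x 0 ≠ 0 := fun x => (mul_pos ha (F_pos ha x)).ne'
  have hD0 : ∀ x, HasDerivAt B (-(a * F a x 1) / (a * F a x 0) ^ 2) x := by
    intro x
    exact ((hasDerivAt_F ha 0 x).const_mul a).inv (hne x)
  have hD1 : ∀ x, HasDerivAt (fun y => -(a * F a y 1) / (a * F a y 0) ^ 2)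
      ((-(a * F a x 2) * (a * F a x 0) ^ 2
        - -(a * F a x 1) * (2 * (a * F a x 0) ^ 1 * (a * F a x 1))) / ((a * F a x 0) ^ 2) ^ 2)
      x := by
    intro x
    exact (((hasDerivAt_F ha 1 x).const_mul a).neg).div
      (((hasDerivAt_F ha 0 x).const_mul a).pow 2) (pow_ne_zero 2 (hne x))
  have hderivB : deriv B = fun x => -(a * F a x 1) / (a * F a x 0) ^ 2 :=
    funext fun x => (hD0 x).deriv
  apply strictConvexOn_of_deriv2_pos (convex_Ici 0)
  · exact Continuous.continuousOn (continuous_iff_continuousAt.2 fun x =>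
      (hD0 x).differentiableAt.continuousAt)
  · intro x _
    have h2 : deriv^[2] B x = deriv (deriv B) x := rfl
    rw [h2, hderivB, (hD1 x).deriv]
    have hkey := key_ineq' ha x
    have hF0 := F_pos ha x
    have hnum : -(a * F a x 2) * (a * F a x 0) ^ 2
        - -(a * F a x 1) * (2 * (a * F a x 0) ^ 1 * (a * F a x 1))
        = a ^ 3 * (F a x 0 * (2 * F a x 1 ^ 2 - F a x 0 * F a x 2)) := by ring
    apply div_pos
    · rw [hnum]
      apply mul_pos (pow_pos ha 3)
      apply mul_pos hF0
      linarith
    · positivity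
end

section
/- For every real λ > 0, the continued Erlang loss function x ↦ B(x, λ) is strictly decreasing on the interval [0, ∞); that is, for 0 ≤ x < y one has B(y, λ) < B(x, λ). -/
open MeasureTheory

lemma erlang_integrable {a x : ℝ} (ha : 0 < a) (hx : 0 ≤ x) :
    IntegrableOn (fun t : ℝ => Real.exp (-a * t) * (1 + t) ^ x) (Set.Ioi 0) := by
  have h1 : IntegrableOn (fun t : ℝ => Real.exp (-a * t)) (Set.Ioi (0:ℝ)) :=
    exp_neg_integrableOn_Ioi 0 ha
  have h2 : IntegrableOn (fun t : ℝ => t ^ x * Real.exp (-a * t)) (Set.Ioi (0:ℝ)) := by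
    have := integrableOn_rpow_mul_exp_neg_mul_rpow (p := 1) (s := x) (b := a)
      (by linarith) one_pos ha
    simpa using this
  have hmeas : AEStronglyMeasurable (fun t : ℝ => Real.exp (-a * t) * (1 + t) ^ x)
      (volume.restrict (Set.Ioi (0:ℝ))) := by
    refine ContinuousOn.aestronglyMeasurable ?_ measurableSet_Ioi
    refine ((Real.continuous_exp.comp (continuous_const.mul continuous_id)).continuousOn).mul ?_
    exact (continuousOn_const.add continuousOn_id).rpow_const
      fun t ht => Or.inl (by simp only [Set.mem_Ioi] at ht; show (1:ℝ) + t ≠ 0; positivity)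
  have hg : IntegrableOn
      (fun t : ℝ => (2:ℝ)^x * (Real.exp (-a * t) + t ^ x * Real.exp (-a * t)))
      (Set.Ioi (0:ℝ)) := ((h1.add h2).const_mul _)
  refine hg.mono' hmeas ?_
  filter_upwards [ae_restrict_mem measurableSet_Ioi] with t ht
  simp only [Set.mem_Ioi] at ht
  have hexp : (0:ℝ) < Real.exp (-a * t) := Real.exp_pos _
  rw [Real.norm_eq_abs, abs_of_nonneg (by positivity)]
  have hb : (1 + t) ≤ 2 * max 1 t := by
    rcases le_total t 1 with h | h
    · have : (1:ℝ) ≤ max 1 t := le_max_left _ _; nlinarith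
    · have : t ≤ max 1 t := le_max_right _ _; nlinarith
  have h3 : (1 + t) ^ x ≤ (2 * max 1 t) ^ x :=
    Real.rpow_le_rpow (by linarith) hb hx
  have h4 : (2 * max 1 t) ^ x = 2 ^ x * (max 1 t) ^ x :=
    Real.mul_rpow (by norm_num) (by positivity)
  have h5 : (max 1 t) ^ x ≤ 1 + t ^ x := by
    rcases le_total t 1 with h | h
    · rw [max_eq_left h, Real.one_rpow]
      have : (0:ℝ) ≤ t ^ x := by positivity
      linarith
    · rw [max_eq_right h]
      have : (0:ℝ) ≤ t ^ x := by positivity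
      linarith
  have h2x : (0:ℝ) ≤ 2 ^ x := by positivity
  calc Real.exp (-a * t) * (1 + t) ^ x
      ≤ Real.exp (-a * t) * (2 ^ x * (1 + t ^ x)) := by
        refine mul_le_mul_of_nonneg_left ?_ hexp.le
        calc (1 + t) ^ x ≤ 2 ^ x * (max 1 t) ^ x := by rw [← h4]; exact h3
          _ ≤ 2 ^ x * (1 + t ^ x) := mul_le_mul_of_nonneg_left h5 h2x
    _ = 2 ^ x * (Real.exp (-a * t) + t ^ x * Real.exp (-a * t)) := by ring

theorem stmt_6 (a : ℝ) (ha : 0 < a) (x y : ℝ) (hx : 0 ≤ x) (hxy : x < y) :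
    erlangB y a < erlangB x a := by
  have hy : 0 ≤ y := le_trans hx hxy.le
  have hix := erlang_integrable ha hx
  have hiy := erlang_integrable ha hy
  set Ix := ∫ t in Set.Ioi (0:ℝ), Real.exp (-a * t) * (1 + t) ^ x with hIx
  set Iy := ∫ t in Set.Ioi (0:ℝ), Real.exp (-a * t) * (1 + t) ^ y with hIy
  have hIxpos : 0 < Ix := by
    rw [hIx]
    refine (setIntegral_pos_iff_support_of_nonneg_ae ?_ hix).2 ?_
    · filter_upwards [ae_restrict_mem measurableSet_Ioi] with t ht
      simp only [Set.mem_Ioi] at ht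
      positivity
    · have hsub : Set.Ioi (0:ℝ) ⊆ Function.support (fun t => Real.exp (-a * t) * (1 + t) ^ x) ∩ Set.Ioi 0 := by
        intro t ht
        simp only [Set.mem_Ioi] at ht
        refine ⟨?_, ht⟩
        simp only [Function.mem_support]
        positivity
      have h0 : (0:ENNReal) < volume (Set.Ioi (0:ℝ)) := by simp
      exact lt_of_lt_of_le h0 (measure_mono hsub)
  have hlt : Ix < Iy := by
    have hdiff : 0 < Iy - Ix := by
      rw [hIx, hIy, ← integral_sub hiy hix]
      refine (setIntegral_pos_iff_support_of_nonneg_ae ?_ (hiy.sub hix)).2 ?_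
      · filter_upwards [ae_restrict_mem measurableSet_Ioi] with t ht
        simp only [Set.mem_Ioi] at ht
        have h1t : (1:ℝ) < 1 + t := by linarith
        have hr : (1 + t) ^ x < (1 + t) ^ y := (Real.rpow_lt_rpow_left_iff h1t).2 hxy
        have hexp : (0:ℝ) < Real.exp (-a * t) := Real.exp_pos _
        simp only [Pi.zero_apply, Pi.sub_apply]
        nlinarith
      · have hsub : Set.Ioi (0:ℝ) ⊆ Function.support
            ((fun t => Real.exp (-a * t) * (1 + t) ^ y) -
             (fun t => Real.exp (-a * t) * (1 + t) ^ x)) ∩ Set.Ioi 0 := by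
          intro t ht
          simp only [Set.mem_Ioi] at ht
          refine ⟨?_, ht⟩
          simp only [Function.mem_support, Pi.sub_apply]
          have h1t : (1:ℝ) < 1 + t := by linarith
          have hr : (1 + t) ^ x < (1 + t) ^ y := (Real.rpow_lt_rpow_left_iff h1t).2 hxy
          have hexp : (0:ℝ) < Real.exp (-a * t) := Real.exp_pos _
          nlinarith
        have h0 : (0:ENNReal) < volume (Set.Ioi (0:ℝ)) := by simp
        exact lt_of_lt_of_le h0 (measure_mono hsub)
    linarith
  unfold erlangB
  rw [← hIx, ← hIy]
  exact inv_strictAnti₀ (by positivity) (by nlinarith)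
end
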